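/- The class 𝒮 of (codes of) regular Suslin trees is a Π¹₁ subset of 2^{ω₁}: there is an open set B ⊆ 2^{ω₁} × ω₁^{ω₁} such that a code T belongs to 𝒮 if and only if (T, g) ∈ B for every g ∈ ω₁^{ω₁}. -/

import Mathlib

noncomputable section

open Set

/-- The ordinal `ω₁`. -/
abbrev omega1Ord : Ordinal := (Cardinal.aleph 1).ord

/-- `ω₁`, the first uncountable ordinal, as a type. -/
abbrev Omega1 : Type := omega1Ord.ToType

open Classical in
/-- The height of a node `b` in the tree given by the strict order `r`:
the order type of the set of `r`-predecessors of `b`. -/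
noncomputable def treeHeight {α : Type} (r : α → α → Prop) (b : α) : Ordinal :=
  if h : IsWellOrder {a // r a b} (fun x y => r x.1 y.1) then
    @Ordinal.type {a // r a b} (fun x y => r x.1 y.1) h
  else 0

/-- The level `ξ` of the tree given by `r`: the set of nodes of height `ξ`. -/
def treeLevel {α : Type} (r : α → α → Prop) (ξ : Ordinal) : Set α :=
  {b | treeHeight r b = ξ}

/-- `r` is a (strict) tree order: it is transitive and irreflexive, and the set of
predecessors of any node is well-ordered by `r`. -/
structure IsTreeOrder {α : Type} (r : α → α → Prop) : Prop where
  trans : ∀ a b c, r a b → r b c → r a c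
  irrefl : ∀ a, ¬ r a a
  pred_trichot : ∀ a b c, r a c → r b c → (r a b ∨ a = b ∨ r b a)
  pred_wellOrdered : ∀ c, ∀ S : Set α, (∀ a ∈ S, r a c) → S.Nonempty →
    ∃ m ∈ S, ∀ a ∈ S, m = a ∨ r m a

/-- An `ℵ₁`-tree on `ω₁`: a tree order all of whose levels are countable,
with the levels below `ω₁` nonempty and the levels from `ω₁` onwards empty. -/
structure IsAleph1Tree (r : Omega1 → Omega1 → Prop) : Prop where
  toIsTreeOrder : IsTreeOrder r
  level_countable : ∀ ξ : Ordinal, (treeLevel r ξ).Countable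
  level_nonempty : ∀ ξ : Ordinal, ξ < omega1Ord → (treeLevel r ξ).Nonempty
  level_empty_of_ge : ∀ ξ : Ordinal, omega1Ord ≤ ξ → treeLevel r ξ = ∅

/-- `t` is an immediate successor of `s`. -/
def ImmSucc {α : Type} (r : α → α → Prop) (s t : α) : Prop :=
  r s t ∧ ¬ ∃ u, r s u ∧ r u t

/-- A regular tree on `ω₁`: an `ℵ₁`-tree which is rooted, in which every node has
at least two immediate successors, and which is pruned. -/
structure IsRegularTree (r : Omega1 → Omega1 → Prop) : Prop where
  toIsAleph1Tree : IsAleph1Tree r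
  rooted : ∃ rt, ∀ a, a = rt ∨ r rt a
  binBranching : ∀ s, ∃ t₁ t₂, t₁ ≠ t₂ ∧ ImmSucc r s t₁ ∧ ImmSucc r s t₂
  pruned : ∀ s, ∀ γ : Ordinal, treeHeight r s < γ → γ < omega1Ord →
    ∃ t, r s t ∧ treeHeight r t = γ

/-- `c` is a chain with respect to `r`. -/
def IsChainIn {α : Type} (r : α → α → Prop) (c : Set α) : Prop :=
  ∀ a ∈ c, ∀ b ∈ c, a = b ∨ r a b ∨ r b a

/-- `c` is an antichain with respect to `r`. -/
def IsAntichainIn {α : Type} (r : α → α → Prop) (c : Set α) : Prop :=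
  ∀ a ∈ c, ∀ b ∈ c, a ≠ b → ¬ r a b ∧ ¬ r b a

/-- A branch: a maximal chain. -/
def IsBranchIn {α : Type} (r : α → α → Prop) (c : Set α) : Prop :=
  IsChainIn r c ∧ ∀ c', IsChainIn r c' → c ⊆ c' → c = c'

/-- An Aronszajn tree: an `ℵ₁`-tree with no uncountable chain. -/
def IsAronszajnTree (r : Omega1 → Omega1 → Prop) : Prop :=
  IsAleph1Tree r ∧ ∀ c : Set Omega1, IsChainIn r c → c.Countable

/-- A Suslin tree: an Aronszajn tree with no uncountable antichain. -/
def IsSuslinTree (r : Omega1 → Omega1 → Prop) : Prop :=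
  IsAronszajnTree r ∧ ∀ c : Set Omega1, IsAntichainIn r c → c.Countable

/-- A special Aronszajn tree: an Aronszajn tree which is the union of
countably many antichains. -/
def IsSpecialAronszajnTree (r : Omega1 → Omega1 → Prop) : Prop :=
  IsAronszajnTree r ∧
    ∃ A : ℕ → Set Omega1, (∀ n, IsAntichainIn r (A n)) ∧ (⋃ n, A n) = Set.univ

/-- A Kurepa tree: an `ℵ₁`-tree with at least `ℵ₂` uncountable branches. -/
def IsKurepaTree (r : Omega1 → Omega1 → Prop) : Prop :=
  IsAleph1Tree r ∧
    Cardinal.aleph 2 ≤ Cardinal.mk {c : Set Omega1 // IsBranchIn r c ∧ ¬ c.Countable}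

/-- A fixed bijection `ω₁ × ω₁ ≃ ω₁`. -/
def pairEquiv : Omega1 × Omega1 ≃ Omega1 := Classical.choice <| by
  rw [← Cardinal.eq]
  have h1 : Cardinal.mk Omega1 = Cardinal.aleph 1 := by
    rw [Cardinal.mk_toType, Cardinal.card_ord]
  simp only [Cardinal.mk_prod, Cardinal.lift_id, h1]
  exact Cardinal.mul_eq_self (Cardinal.aleph0_le_aleph 1)

/-- The tree relation on `ω₁` coded by `x : 2^{ω₁}` via the fixed pairing bijection. -/
def codedRel (x : Omega1 → Bool) : Omega1 → Omega1 → Prop :=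
  fun a b => x (pairEquiv (a, b)) = true

/-- `x` is a code of a regular tree on `ω₁`. -/
def IsRegularTreeCode (x : Omega1 → Bool) : Prop := IsRegularTree (codedRel x)

/-! ### The generalized Baire space topology -/

/-- The basic open set `[p]` determined by a partial function `p`. -/
def gbsBasic {I X : Type} (p : I → Option X) : Set (I → X) :=
  {x | ∀ i : I, ∀ y : X, p i = some y → x i = y}

/-- `p` is a countable partial function, i.e. it has countable support. -/
def CtblSupp {I X : Type} (p : I → Option X) : Prop :=
  {i | p i ≠ none}.Countable

/-- The topology on `X^I` generated by the sets `[p]` for countable partial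
functions `p`. -/
def gbsTop (I X : Type) : TopologicalSpace (I → X) :=
  TopologicalSpace.generateFrom
    {s | ∃ p : I → Option X, CtblSupp p ∧ s = gbsBasic p}

/-- The `ω₁`-Borel subsets of a topological space: the smallest family containing
the open sets and closed under complements and unions of `ℵ₁`-many sets. -/
inductive IsOmega1Borel {β : Type} (t : TopologicalSpace β) : Set β → Prop
  | basic (s : Set β) : t.IsOpen s → IsOmega1Borel t s
  | compl (s : Set β) : IsOmega1Borel t s → IsOmega1Borel t sᶜ
  | iUnion (f : Omega1 → Set β) : (∀ i, IsOmega1Borel t (f i)) →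
      IsOmega1Borel t (⋃ i, f i)

/-- `A` is `Π¹₁`: there is an open `B ⊆ β × ω₁^{ω₁}` with
`x ∈ A ↔ ∀ g, (x, g) ∈ B`. -/
def IsPi11 {β : Type} (t : TopologicalSpace β) (A : Set β) : Prop :=
  ∃ B : Set (β × (Omega1 → Omega1)),
    (@instTopologicalSpaceProd β (Omega1 → Omega1) t (gbsTop Omega1 Omega1)).IsOpen B ∧
    ∀ x, x ∈ A ↔ ∀ g : Omega1 → Omega1, (x, g) ∈ B

/-- `A` is `Σ¹₁`: its complement is `Π¹₁`. -/
def IsSigma11 {β : Type} (t : TopologicalSpace β) (A : Set β) : Prop :=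
  IsPi11 t Aᶜ

/-- `A` is `Δ¹₁`: both `Σ¹₁` and `Π¹₁`. -/
def IsDelta11 {β : Type} (t : TopologicalSpace β) (A : Set β) : Prop :=
  IsPi11 t A ∧ IsSigma11 t A

/-! ### Meagerness and the Baire property -/

/-- `s` is nowhere dense with respect to the topology `t`. -/
def IsNwdIn {β : Type} (t : TopologicalSpace β) (s : Set β) : Prop :=
  @interior β t (@closure β t s) = ∅

/-- `s` is (`ω₁`-)meager: it is covered by `ℵ₁`-many nowhere dense sets. -/
def IsOmega1Meager {β : Type} (t : TopologicalSpace β) (s : Set β) : Prop :=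
  ∃ f : Omega1 → Set β, (∀ i, IsNwdIn t (f i)) ∧ s ⊆ ⋃ i, f i

/-- `s` has the Baire property: its symmetric difference with some open set is meager. -/
def HasBaireProperty {β : Type} (t : TopologicalSpace β) (s : Set β) : Prop :=
  ∃ o : Set β, t.IsOpen o ∧ IsOmega1Meager t ((s \ o) ∪ (o \ s))

/-! ### The space of regular trees -/

/-- The space of (codes of) regular trees on `ω₁`. -/
abbrev RegTreeSpace : Type := {x : Omega1 → Bool // IsRegularTreeCode x}

/-- The subspace topology on the space of regular trees. -/
def regTreeTop : TopologicalSpace RegTreeSpace :=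
  TopologicalSpace.induced (fun z => z.1) (gbsTop Omega1 Bool)

/-- The trace of the basic open set `[p]` on the space of regular trees. -/
def regTreeBasic (p : Omega1 → Option Bool) : Set RegTreeSpace :=
  {z | z.1 ∈ gbsBasic p}

/-- Two tree relations on `ω₁` are isomorphic. -/
def TreeIso (r r' : Omega1 → Omega1 → Prop) : Prop :=
  ∃ e : Omega1 ≃ Omega1, ∀ a b, r a b ↔ r' (e a) (e b)

/-! ### Clubs, stationary sets and diamonds -/

/-- `C ⊆ ω₁` is club: it is unbounded and contains all of its limit points. -/
def IsClubIn (C : Set Omega1) : Prop :=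
  (∀ a : Omega1, ∃ b ∈ C, a < b) ∧
  (∀ a : Omega1, (∃ b, b < a) → (∀ b, b < a → ∃ c ∈ C, b < c ∧ c < a) → a ∈ C)

/-- `X ⊆ ω₁` is stationary: it meets every club. -/
def IsStationarySet (X : Set Omega1) : Prop :=
  ∀ C : Set Omega1, IsClubIn C → (X ∩ C).Nonempty

/-- The diamond-plus principle `◊⁺` on `ω₁`. -/
def DiamondPlus : Prop :=
  ∃ A : Omega1 → Set (Set Omega1),
    (∀ α, (A α).Countable) ∧
    ∀ X : Set Omega1, ∃ C : Set Omega1, IsClubIn C ∧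
      ∀ α ∈ C, (C ∩ {b | b < α}) ∈ A α ∧ (X ∩ {b | b < α}) ∈ A α

/-! ### Completeness -/

/-- `A ⊆ 2^{ω₁}` is `Π¹₁`-complete. -/
def IsPi11Complete (A : Set (Omega1 → Bool)) : Prop :=
  IsPi11 (gbsTop Omega1 Bool) A ∧
  ∀ S : Set (Omega1 → Bool), IsPi11 (gbsTop Omega1 Bool) S →
    ∃ π : (Omega1 → Bool) → Omega1 → Bool,
      @Continuous _ _ (gbsTop Omega1 Bool) (gbsTop Omega1 Bool) π ∧
      ∀ x, x ∈ S ↔ π x ∈ A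

/-- `A ⊆ 2^{ω₁}` is `Σ¹₁`-complete. -/
def IsSigma11Complete (A : Set (Omega1 → Bool)) : Prop :=
  IsSigma11 (gbsTop Omega1 Bool) A ∧
  ∀ S : Set (Omega1 → Bool), IsSigma11 (gbsTop Omega1 Bool) S →
    ∃ π : (Omega1 → Bool) → Omega1 → Bool,
      @Continuous _ _ (gbsTop Omega1 Bool) (gbsTop Omega1 Bool) π ∧
      ∀ x, x ∈ S ↔ π x ∈ A

/-- The set of codes of stationary subsets of `ω₁`, as a subset of `2^{ω₁}`. -/
def StatCodes : Set (Omega1 → Bool) := {x | IsStationarySet {a | x a = true}}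

/-!
A code is a regular Suslin tree iff it codes a tree order with no uncountable chain or
antichain, with a root, with two immediate successors above every node, and in which the set
of nodes above any node is uncountable: the conditions on the levels and prunedness follow,
since levels are antichains, the predecessors of a node form a chain, and a countable cone
meets only countably many levels.

Each of these conditions says that for every `g ∈ ω₁^{ω₁}` a condition on `(T, g)` holds that
depends on countably many coordinates only, hence defines an open set: `g` supplies the
nodes, a descending sequence, an enumeration of a cone, a Skolem function refuting an
existential statement, or an injection `ω₁ → ω₁` enumerating a chain or an antichain.
Finally `Π¹₁` is closed under intersections of length `ω₁`, because `ω₁ ⊕ ω₁ ≃ ω₁` lets a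
single `g` carry both the index of the intersection and the witness for that index.
-/

open Cardinal Topology

section GeneralizedBaireSpace

variable {I J X Y : Type}

lemma isOpen_gbsTop_setOf_eqOn {F : Set I} (hF : F.Countable) (x : I → X) :
    IsOpen[gbsTop I X] {y | EqOn y x F} := by
  classical
  refine TopologicalSpace.isOpen_generateFrom_of_mem
    ⟨fun i => if i ∈ F then some (x i) else none, hF.mono fun i hi => ?_, ?_⟩
  · by_contra h
    exact hi (if_neg h)
  · ext y
    simp only [gbsBasic, mem_ofPred_eq, EqOn]
    refine ⟨fun h i y' hi => ?_, fun h i hi => h i (x i) (if_pos hi)⟩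
    split_ifs at hi with hiF
    exact (h hiF).trans (Option.some.inj hi)

lemma isOpen_gbsTop_of_forall {s : Set (I → X)}
    (h : ∀ x ∈ s, ∃ F : Set I, F.Countable ∧ ∀ y, EqOn y x F → y ∈ s) :
    IsOpen[gbsTop I X] s := by
  let _ := gbsTop I X
  refine isOpen_iff_forall_mem_open.2 fun x hx => ?_
  obtain ⟨F, hF, hFs⟩ := h x hx
  exact ⟨_, hFs, isOpen_gbsTop_setOf_eqOn hF x, fun _ _ => rfl⟩

lemma isOpen_prod_gbsTop_of_forall {S : Set ((I → X) × (J → Y))}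
    (h : ∀ p ∈ S, ∃ F : Set I, F.Countable ∧ ∃ G : Set J, G.Countable ∧
      ∀ q : (I → X) × (J → Y), EqOn q.1 p.1 F → EqOn q.2 p.2 G → q ∈ S) :
    IsOpen[@instTopologicalSpaceProd _ _ (gbsTop I X) (gbsTop J Y)] S := by
  let _ := gbsTop I X
  let _ := gbsTop J Y
  refine isOpen_iff_forall_mem_open.2 fun p hp => ?_
  obtain ⟨F, hF, G, hG, hS⟩ := h p hp
  exact ⟨_, fun q hq => hS q hq.1 hq.2,
    (isOpen_gbsTop_setOf_eqOn hF p.1).prod (isOpen_gbsTop_setOf_eqOn hG p.2),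
    fun _ _ => rfl, fun _ _ => rfl⟩

lemma continuous_gbsTop_comp (σ : I → J) :
    Continuous[gbsTop J X, gbsTop I X] fun g => g ∘ σ := by
  refine continuous_generateFrom_iff.2 ?_
  rintro _ ⟨p, hp, rfl⟩
  refine isOpen_gbsTop_of_forall fun g hg => ⟨σ '' {i | p i ≠ none}, hp.image σ, ?_⟩
  intro y hy i v hv
  exact (hy ⟨i, by simp [hv], rfl⟩).trans (hg i v hv)

end GeneralizedBaireSpace

lemma mk_omega1 : #Omega1 = ℵ₁ := by
  rw [mk_toType, card_ord]

instance : Infinite Omega1 :=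
  Cardinal.infinite_iff.2 (mk_omega1 ▸ aleph0_le_aleph 1)

def omega1SumEquiv : Omega1 ⊕ Omega1 ≃ Omega1 :=
  Classical.choice <| Cardinal.eq.1 <| by
    rw [mk_sum, lift_id, mk_omega1]
    exact add_eq_self (aleph0_le_aleph 1)

section Pi11

variable {β : Type} {t : TopologicalSpace β}

lemma continuous_prodMap_comp (σ : Omega1 → Omega1) :
    Continuous[@instTopologicalSpaceProd _ _ t (gbsTop Omega1 Omega1),
      @instTopologicalSpaceProd _ _ t (gbsTop Omega1 Omega1)]
      (Prod.map id fun g => g ∘ σ) :=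
  let _ := gbsTop Omega1 Omega1
  continuous_id.prodMap (continuous_gbsTop_comp σ)

lemma IsPi11.inter {A A' : Set β} (hA : IsPi11 t A) (hA' : IsPi11 t A') :
    IsPi11 t (A ∩ A') := by
  let _ := t
  let _ := gbsTop Omega1 Omega1
  obtain ⟨B, hB, hAB⟩ := hA
  obtain ⟨B', hB', hAB'⟩ := hA'
  let σ : Omega1 → Omega1 := omega1SumEquiv ∘ Sum.inl
  let σ' : Omega1 → Omega1 := omega1SumEquiv ∘ Sum.inr
  refine ⟨Prod.map id (· ∘ σ) ⁻¹' B ∩ Prod.map id (· ∘ σ') ⁻¹' B',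
    ((continuous_prodMap_comp σ).isOpen_preimage _ hB).inter
      ((continuous_prodMap_comp σ').isOpen_preimage _ hB'),
    fun x => ⟨fun ⟨hx, hx'⟩ g => ⟨(hAB x).1 hx _, (hAB' x).1 hx' _⟩, fun h => ⟨?_, ?_⟩⟩⟩
  · refine (hAB x).2 fun g => ?_
    simpa [σ, Function.comp_def] using (h (Sum.elim g g ∘ omega1SumEquiv.symm)).1
  · refine (hAB' x).2 fun g => ?_
    simpa [σ', Function.comp_def] using (h (Sum.elim g g ∘ omega1SumEquiv.symm)).2

lemma IsPi11.iInter {A : Omega1 → Set β} (hA : ∀ i, IsPi11 t (A i)) :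
    IsPi11 t (⋂ i, A i) := by
  choose B hB hAB using hA
  let _ := t
  let _ := gbsTop Omega1 Omega1
  obtain ⟨o⟩ : Nonempty Omega1 := inferInstance
  let σ : Omega1 → Omega1 := omega1SumEquiv ∘ Sum.inr
  let index (g : Omega1 → Omega1) : Omega1 := g (omega1SumEquiv (Sum.inl o))
  refine ⟨⋃ i, {p | index p.2 = i} ∩ Prod.map id (· ∘ σ) ⁻¹' B i, ?_, fun x => ?_⟩
  · refine isOpen_iUnion fun i =>
      IsOpen.inter ?_ ((continuous_prodMap_comp σ).isOpen_preimage _ (hB i))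
    have : {p : β × (Omega1 → Omega1) | index p.2 = i} =
        Prod.snd ⁻¹' {g | EqOn g (fun _ => i) {omega1SumEquiv (Sum.inl o)}} := by
      ext; simp [index]
    exact this ▸ continuous_snd.isOpen_preimage _
      (isOpen_gbsTop_setOf_eqOn (countable_singleton _) _)
  simp only [mem_iInter, mem_iUnion, mem_inter_iff, mem_preimage, mem_ofPred_eq, hAB]
  refine ⟨fun h g => ⟨_, rfl, h _ _⟩, fun h i g => ?_⟩
  obtain ⟨j, hj, hg⟩ := h (Sum.elim (fun _ => i) g ∘ omega1SumEquiv.symm)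
  simp only [index, Function.comp_apply, Equiv.symm_apply_apply, Sum.elim_inl] at hj
  subst hj
  simpa [σ, Function.comp_def] using hg

end Pi11

lemma isPi11_of_forall_local {A : Set (Omega1 → Bool)}
    (P : (Omega1 → Bool) → (Omega1 → Omega1) → Prop) (hA : ∀ x, x ∈ A ↔ ∀ g, P x g)
    (hP : ∀ x g, P x g → ∃ E : Set (Omega1 × Omega1), E.Countable ∧ ∃ G : Set Omega1,
      G.Countable ∧ ∀ x' g', (∀ a b, (a, b) ∈ E → (codedRel x' a b ↔ codedRel x a b)) →
        (∀ i ∈ G, g' i = g i) → P x' g') :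
    IsPi11 (gbsTop Omega1 Bool) A := by
  refine ⟨{p | P p.1 p.2}, isOpen_prod_gbsTop_of_forall fun p hp => ?_, hA⟩
  obtain ⟨E, hE, G, hG, hPE⟩ := hP p.1 p.2 hp
  refine ⟨pairEquiv '' E, hE.image _, G, hG, fun q hq hq' => hPE q.1 q.2 ?_ fun i hi => hq' hi⟩
  intro a b hab
  rw [codedRel, codedRel, hq ⟨(a, b), hab, rfl⟩]

lemma isPi11_of_local {A : Set (Omega1 → Bool)} (E : Set (Omega1 × Omega1)) (hE : E.Countable)
    (hA : ∀ x x', (∀ a b, (a, b) ∈ E → (codedRel x' a b ↔ codedRel x a b)) → x ∈ A → x' ∈ A) :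
    IsPi11 (gbsTop Omega1 Bool) A :=
  isPi11_of_forall_local (fun x _ => x ∈ A) (by simp) fun x _ hx =>
    ⟨E, hE, ∅, countable_empty, fun x' _ hE' _ => hA x x' hE' hx⟩

lemma treeHeight_eq_zero {α : Type} {r : α → α → Prop} {b : α} (hb : ∀ a, ¬ r a b) :
    treeHeight r b = 0 := by
  have : IsEmpty {a // r a b} := ⟨fun a => hb a.1 a.2⟩
  rw [treeHeight]
  split_ifs <;> simp [this]

lemma countable_Iio_iff_lt_omega1 {γ : Ordinal.{0}} : (Iio γ).Countable ↔ γ < omega1Ord := by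
  rw [← le_aleph0_iff_set_countable, mk_Iio_ordinal, lift_le_aleph0, lt_ord, lt_aleph_one_iff]

namespace IsTreeOrder

variable {α : Type} {r : α → α → Prop}

lemma isWellOrder_pred (hT : IsTreeOrder r) (b : α) :
    IsWellOrder {a // r a b} (fun u v => r u.1 v.1) where
  trichotomous u v huv hvu := by
    rcases hT.pred_trichot u.1 v.1 b u.2 v.2 with h | h | h
    exacts [absurd h huv, Subtype.ext h, absurd h hvu]
  wf := by
    refine WellFounded.wellFounded_iff_has_min.2 fun S ⟨u, hu⟩ => ?_
    obtain ⟨_, ⟨m, hm, rfl⟩, hmin⟩ := hT.pred_wellOrdered b (Subtype.val '' S)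
      (by rintro _ ⟨v, -, rfl⟩; exact v.2) ⟨u, u, hu, rfl⟩
    refine ⟨m, hm, fun v hv hvm => ?_⟩
    rcases hmin v ⟨v, hv, rfl⟩ with h | h
    · exact hT.irrefl _ (h ▸ hvm)
    · exact hT.irrefl _ (hT.trans _ _ _ h hvm)

lemma treeHeight_eq_type (hT : IsTreeOrder r) (b : α) :
    treeHeight r b = @Ordinal.type _ _ (hT.isWellOrder_pred b) := by
  rw [treeHeight, dif_pos (hT.isWellOrder_pred b)]

lemma treeHeight_lt_treeHeight (hT : IsTreeOrder r) {a b : α} (hab : r a b) :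
    treeHeight r a < treeHeight r b := by
  let _ := hT.isWellOrder_pred a
  let _ := hT.isWellOrder_pred b
  rw [hT.treeHeight_eq_type, hT.treeHeight_eq_type]
  refine PrincipalSeg.ordinal_type_lt ⟨⟨⟨fun u => ⟨u.1, hT.trans _ _ _ u.2 hab⟩,
    fun _ _ h => Subtype.ext (congrArg Subtype.val h :)⟩, Iff.rfl⟩, ⟨a, hab⟩, fun v => ?_⟩
  exact ⟨by rintro ⟨u, rfl⟩; exact u.2, fun h => ⟨⟨v.1, h⟩, rfl⟩⟩

lemma exists_treeHeight_eq (hT : IsTreeOrder r) {t : α} {β : Ordinal}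
    (hβ : β < treeHeight r t) : ∃ u, r u t ∧ treeHeight r u = β := by
  let _ := hT.isWellOrder_pred t
  rw [hT.treeHeight_eq_type] at hβ
  obtain ⟨u, rfl⟩ := Ordinal.typein_surj _ hβ
  refine ⟨u.1, u.2, ?_⟩
  let _ := hT.isWellOrder_pred u.1
  rw [hT.treeHeight_eq_type, ← Ordinal.type_subrel]
  exact RelIso.ordinalType_congr ⟨⟨fun c => ⟨⟨c.1, hT.trans _ _ _ c.2 u.2⟩, c.2⟩,
    fun c => ⟨c.1.1, c.2⟩, fun _ => rfl, fun _ => rfl⟩, Iff.rfl⟩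

lemma rel_of_treeHeight_lt (hT : IsTreeOrder r) {s u t : α} (hst : r s t) (hut : r u t)
    (h : treeHeight r s < treeHeight r u) : r s u := by
  rcases hT.pred_trichot s u t hst hut with h' | rfl | h'
  · exact h'
  · exact absurd h (lt_irrefl _)
  · exact absurd (hT.treeHeight_lt_treeHeight h') h.not_gt

lemma isAntichainIn_treeLevel (hT : IsTreeOrder r) (ξ : Ordinal) :
    IsAntichainIn r (treeLevel r ξ) := by
  intro a (ha : treeHeight r a = ξ) b (hb : treeHeight r b = ξ) _
  exact ⟨fun h => (hT.treeHeight_lt_treeHeight h).ne (ha.trans hb.symm),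
    fun h => (hT.treeHeight_lt_treeHeight h).ne (hb.trans ha.symm)⟩

lemma isChainIn_setOf_rel (hT : IsTreeOrder r) (b : α) : IsChainIn r {a | r a b} := by
  intro a ha c hc
  rcases hT.pred_trichot a c b ha hc with h | h | h
  exacts [Or.inr (Or.inl h), Or.inl h, Or.inr (Or.inr h)]

lemma treeHeight_lt_omega1 (hT : IsTreeOrder r) {b : α} (hb : {a | r a b}.Countable) :
    treeHeight r b < omega1Ord := by
  rw [hT.treeHeight_eq_type, lt_ord, Ordinal.card_type]
  exact hb.le_aleph0.trans_lt aleph0_lt_aleph_one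

lemma exists_treeHeight_eq_of_not_countable (hT : IsTreeOrder r)
    (hanti : ∀ C, IsAntichainIn r C → C.Countable) {s : α}
    (hs : ¬ {t | r s t}.Countable) {γ : Ordinal} (hsγ : treeHeight r s < γ)
    (hγ : γ < omega1Ord) : ∃ t, r s t ∧ treeHeight r t = γ := by
  by_contra hno
  push Not at hno
  -- a node above `s` of height above `γ` has a predecessor above `s` of height `γ`
  have hbelow : ∀ t, r s t → treeHeight r t < γ := by
    intro t hst
    refine lt_of_le_of_ne (not_lt.1 fun hγt => ?_) (hno t hst)
    obtain ⟨u, hut, hu⟩ := hT.exists_treeHeight_eq hγt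
    exact hno u (hT.rel_of_treeHeight_lt hst hut (hu ▸ hsγ)) hu
  refine hs (((countable_Iio_iff_lt_omega1.2 hγ).biUnion fun β _ =>
    hanti _ (hT.isAntichainIn_treeLevel β)).mono fun t ht => ?_)
  exact mem_biUnion (hbelow t ht) rfl

end IsTreeOrder

lemma isTreeOrder_iff {α : Type} {r : α → α → Prop} :
    IsTreeOrder r ↔ (∀ a b c, r a b → r b c → r a c) ∧ (∀ a, ¬ r a a) ∧
      (∀ a b c, r a c → r b c → r a b ∨ a = b ∨ r b a) ∧
      ∀ c (f : ℕ → α), ¬ ∀ n, r (f n) c ∧ r (f (n + 1)) (f n) := by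
  refine ⟨fun hT => ⟨hT.trans, hT.irrefl, hT.pred_trichot, fun c f hf => ?_⟩,
    fun ⟨htrans, hirrefl, htri, hdesc⟩ => ⟨htrans, hirrefl, htri, fun c S hS hne => ?_⟩⟩
  · obtain ⟨_, ⟨k, rfl⟩, hmin⟩ := hT.pred_wellOrdered c (range f)
      (by rintro _ ⟨n, rfl⟩; exact (hf n).1) ⟨f 0, 0, rfl⟩
    rcases hmin (f (k + 1)) ⟨k + 1, rfl⟩ with h | h
    · exact hT.irrefl _ (h ▸ (hf k).2)
    · exact hT.irrefl _ (hT.trans _ _ _ h (hf k).2)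
  · have hwf : WellFounded fun a b => r a b ∧ r b c :=
      wellFounded_iff_isEmpty_descending_chain.2
        ⟨fun ⟨f, hf⟩ => hdesc c f fun n => ⟨(hf n).2, (hf n).1⟩⟩
    obtain ⟨m, hm, hmin⟩ := hwf.has_min S hne
    refine ⟨m, hm, fun a ha => ?_⟩
    rcases htri a m c (hS a ha) (hS m hm) with h | h | h
    exacts [absurd ⟨h, hS m hm⟩ (hmin a ha), Or.inl h.symm, Or.inr h]

lemma IsAleph1Tree.treeHeight_lt_omega1 {r : Omega1 → Omega1 → Prop} (hT : IsAleph1Tree r)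
    (s : Omega1) : treeHeight r s < omega1Ord := by
  by_contra h
  have hs : s ∈ treeLevel r (treeHeight r s) := rfl
  rw [hT.level_empty_of_ge _ (not_lt.1 h)] at hs
  exact hs

lemma not_countable_setOf_rel {α : Type} {r : α → α → Prop} {s : α}
    (hs : treeHeight r s < omega1Ord)
    (hpruned : ∀ γ, treeHeight r s < γ → γ < omega1Ord → ∃ t, r s t ∧ treeHeight r t = γ) :
    ¬ {t | r s t}.Countable := by
  intro hcount
  have hcover : Iio omega1Ord ⊆
      treeHeight r '' {t | r s t} ∪ Iio (Order.succ (treeHeight r s)) := by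
    intro γ hγ
    rcases lt_or_ge (treeHeight r s) γ with h | h
    · exact Or.inl (hpruned γ h hγ)
    · exact Or.inr (Order.lt_succ_of_le h)
  refine countable_Iio_iff_lt_omega1.not.2 (lt_irrefl _)
    ((hcount.image _).union (countable_Iio_iff_lt_omega1.2 ?_) |>.mono hcover)
  exact (isSuccLimit_ord (aleph0_le_aleph 1)).succ_lt hs

theorem isRegularTree_and_isSuslinTree_iff {r : Omega1 → Omega1 → Prop} :
    IsRegularTree r ∧ IsSuslinTree r ↔
      IsTreeOrder r ∧ (∀ C, IsChainIn r C → C.Countable) ∧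
        (∀ C, IsAntichainIn r C → C.Countable) ∧ (∃ rt, ∀ a, a = rt ∨ r rt a) ∧
        (∀ s, ∃ t₁ t₂, t₁ ≠ t₂ ∧ ImmSucc r s t₁ ∧ ImmSucc r s t₂) ∧
        ∀ s, ¬ {t | r s t}.Countable := by
  refine ⟨fun ⟨⟨hA, hroot, hbin, hpruned⟩, ⟨_, hchain⟩, hanti⟩ =>
    ⟨hA.1, hchain, hanti, hroot, hbin, fun s =>
      not_countable_setOf_rel (hA.treeHeight_lt_omega1 s) (hpruned s)⟩, ?_⟩
  rintro ⟨hT, hchain, hanti, ⟨rt, hrt⟩, hbin, hcone⟩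
  have hpruned : ∀ s γ, treeHeight r s < γ → γ < omega1Ord →
      ∃ t, r s t ∧ treeHeight r t = γ := fun s _ =>
    hT.exists_treeHeight_eq_of_not_countable hanti (hcone s)
  have hrt0 : treeHeight r rt = 0 := treeHeight_eq_zero fun a ha =>
    (hrt a).elim (fun h => hT.irrefl _ (h ▸ ha)) fun h => hT.irrefl _ (hT.trans _ _ _ h ha)
  have hA : IsAleph1Tree r := by
    refine ⟨hT, fun ξ => hanti _ (hT.isAntichainIn_treeLevel ξ), fun ξ hξ => ?_, fun ξ hξ => ?_⟩
    · rcases eq_zero_or_pos ξ with rfl | hpos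
      · exact ⟨rt, hrt0⟩
      · obtain ⟨t, -, ht⟩ := hpruned rt ξ (hrt0 ▸ hpos) hξ
        exact ⟨t, ht⟩
    · refine eq_empty_of_forall_notMem fun b (hb : treeHeight r b = ξ) => hξ.not_gt ?_
      exact hb ▸ hT.treeHeight_lt_omega1 (hchain _ (hT.isChainIn_setOf_rel b))
  exact ⟨⟨hA, ⟨rt, hrt⟩, hbin, hpruned⟩, ⟨hA, hchain⟩, hanti⟩

lemma exists_fun_forall_iff_apply {α β : Type} [Nonempty β] (Q : α → β → Prop) :
    ∃ f : α → β, ∀ a, (∀ b, Q a b) ↔ Q a (f a) := by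
  have h : ∀ a, ∃ b, (∀ b', Q a b') ↔ Q a b := fun a => by
    by_cases h : ∀ b, Q a b
    · obtain ⟨b⟩ := ‹Nonempty β›
      exact ⟨b, iff_of_true h (h b)⟩
    · push Not at h
      obtain ⟨b, hb⟩ := h
      exact ⟨b, iff_of_false (fun h' => hb (h' b)) hb⟩
  exact Classical.skolem.1 h

lemma not_countable_iff_exists_injective (C : Set Omega1) :
    ¬ C.Countable ↔ ∃ f : Omega1 → Omega1, Function.Injective f ∧ ∀ i, f i ∈ C := by
  rw [← le_aleph0_iff_set_countable, not_le, ← Order.succ_le_iff, succ_aleph0, ← mk_omega1,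
    le_def]
  exact ⟨fun ⟨e⟩ => ⟨fun i => e i, fun i j h => e.injective (Subtype.ext h), fun i => (e i).2⟩,
    fun ⟨f, hf, hfC⟩ => ⟨⟨fun i => ⟨f i, hfC i⟩, fun i j h => hf (congrArg Subtype.val h)⟩⟩⟩

lemma forall_pairwise_countable_iff (R : Omega1 → Omega1 → Prop) :
    (∀ C : Set Omega1, C.Pairwise R → C.Countable) ↔
      ∀ f : Omega1 → Omega1, ∃ i j, (f i = f j ∧ i ≠ j) ∨ (f i ≠ f j ∧ ¬ R (f i) (f j)) := by
  refine ⟨fun h f => ?_, fun h C hC => ?_⟩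
  · by_contra hf
    push Not at hf
    refine (not_countable_iff_exists_injective (range f)).2
      ⟨f, fun i j hij => (hf i j).1 hij, mem_range_self⟩ (h _ ?_)
    rintro _ ⟨i, rfl⟩ _ ⟨j, rfl⟩ hij
    exact (hf i j).2 hij
  · by_contra hCount
    obtain ⟨f, hf, hfC⟩ := (not_countable_iff_exists_injective C).1 hCount
    obtain ⟨i, j, ⟨hij, hne⟩ | ⟨hij, hR⟩⟩ := h f
    exacts [hne (hf hij), hR (hC (hfC i) (hfC j) hij)]

lemma isChainIn_iff_pairwise {α : Type} {r : α → α → Prop} {C : Set α} :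
    IsChainIn r C ↔ C.Pairwise fun a b => r a b ∨ r b a :=
  ⟨fun h _ ha _ hb hne => (h _ ha _ hb).resolve_left hne,
    fun h a ha b hb => (eq_or_ne a b).imp_right (h ha hb)⟩

local notation "ν" => Infinite.natEmbedding Omega1

lemma isPi11_isTreeOrder : IsPi11 (gbsTop Omega1 Bool) {x | IsTreeOrder (codedRel x)} := by
  simp only [isTreeOrder_iff, ofPred_and]
  refine .inter ?_ (.inter ?_ (.inter ?_ ?_)) <;> simp only [ofPred_forall]
  · refine .iInter fun a => .iInter fun b => .iInter fun c =>
      isPi11_of_local {(a, b), (b, c), (a, c)} (by simp) fun x x' hx h => ?_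
    simpa (disch := simp) only [mem_ofPred_eq, hx] using h
  · refine .iInter fun a => isPi11_of_local {(a, a)} (by simp) fun x x' hx h => ?_
    simpa (disch := simp) only [mem_ofPred_eq, hx] using h
  · refine .iInter fun a => .iInter fun b => .iInter fun c =>
      isPi11_of_local {(a, c), (b, c), (a, b), (b, a)} (by simp) fun x x' hx h => ?_
    simpa (disch := simp) only [mem_ofPred_eq, hx] using h
  · refine .iInter fun c => isPi11_of_forall_local
      (fun x g => ¬ ∀ n, codedRel x (g (ν n)) c ∧ codedRel x (g (ν (n + 1))) (g (ν n)))
      (fun x => ?_) fun x g h => ?_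
    · simp only [mem_iInter, mem_ofPred_eq]
      exact (ν).injective.surjective_comp_right.forall
    · obtain ⟨n, hn⟩ := not_forall.1 h
      refine ⟨{(g (ν n), c), (g (ν (n + 1)), g (ν n))}, by simp, {ν n, ν (n + 1)}, by simp,
        fun x' g' hx hg h' => hn ?_⟩
      simpa (disch := simp) only [hx, hg] using h' n

lemma isPi11_forall_pairwise_countable (R : (Omega1 → Bool) → Omega1 → Omega1 → Prop)
    (hR : ∀ x x' a b, (codedRel x' a b ↔ codedRel x a b) → (codedRel x' b a ↔ codedRel x b a) →
      (R x' a b ↔ R x a b)) :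
    IsPi11 (gbsTop Omega1 Bool) {x | ∀ C : Set Omega1, C.Pairwise (R x) → C.Countable} := by
  refine isPi11_of_forall_local _ (fun x => forall_pairwise_countable_iff (R x))
    fun x g ⟨i, j, h⟩ => ⟨{(g i, g j), (g j, g i)}, by simp, {i, j}, by simp,
      fun x' g' hx hg => ⟨i, j, ?_⟩⟩
  rwa [hg i (by simp), hg j (by simp), hR x x' _ _ (hx _ _ (by simp)) (hx _ _ (by simp))]

lemma isPi11_rooted :
    IsPi11 (gbsTop Omega1 Bool) {x | ∃ rt, ∀ a, a = rt ∨ codedRel x rt a} := by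
  refine isPi11_of_forall_local (fun x g => ∃ rt, g rt = rt ∨ codedRel x rt (g rt))
    (fun x => ⟨fun ⟨rt, h⟩ g => ⟨rt, h (g rt)⟩, fun h => ?_⟩)
    fun x g ⟨rt, h⟩ => ⟨{(rt, g rt)}, by simp, {rt}, by simp, fun x' g' hx hg => ⟨rt, ?_⟩⟩
  · obtain ⟨f, hf⟩ := exists_fun_forall_iff_apply fun rt a => a = rt ∨ codedRel x rt a
    obtain ⟨rt, hrt⟩ := h f
    exact ⟨rt, (hf rt).2 hrt⟩
  · simpa (disch := simp) only [hx, hg] using h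

lemma isPi11_binBranching : IsPi11 (gbsTop Omega1 Bool)
    {x | ∀ s, ∃ t₁ t₂, t₁ ≠ t₂ ∧ ImmSucc (codedRel x) s t₁ ∧ ImmSucc (codedRel x) s t₂} := by
  simp only [ofPred_forall, ImmSucc, not_exists]
  refine .iInter fun s => isPi11_of_forall_local
    (fun x g => ∃ t₁ t₂, t₁ ≠ t₂ ∧
      (codedRel x s t₁ ∧ ¬ (codedRel x s (g t₁) ∧ codedRel x (g t₁) t₁)) ∧
      (codedRel x s t₂ ∧ ¬ (codedRel x s (g t₂) ∧ codedRel x (g t₂) t₂)))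
    (fun x => ⟨fun ⟨t₁, t₂, hne, h₁, h₂⟩ g => ⟨t₁, t₂, hne, ⟨h₁.1, h₁.2 _⟩, ⟨h₂.1, h₂.2 _⟩⟩,
      fun h => ?_⟩)
    fun x g ⟨t₁, t₂, h⟩ => ⟨{(s, t₁), (s, t₂), (s, g t₁), (g t₁, t₁), (s, g t₂), (g t₂, t₂)},
      by simp, {t₁, t₂}, by simp, fun x' g' hx hg => ⟨t₁, t₂, ?_⟩⟩
  · obtain ⟨f, hf⟩ := exists_fun_forall_iff_apply fun t u => ¬ (codedRel x s u ∧ codedRel x u t)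
    obtain ⟨t₁, t₂, hne, h₁, h₂⟩ := h f
    exact ⟨t₁, t₂, hne, ⟨h₁.1, (hf t₁).2 h₁.2⟩, ⟨h₂.1, (hf t₂).2 h₂.2⟩⟩
  · simpa (disch := simp) only [hx, hg] using h

lemma isPi11_forall_not_countable_setOf_rel :
    IsPi11 (gbsTop Omega1 Bool) {x | ∀ s, ¬ {t | codedRel x s t}.Countable} := by
  simp only [ofPred_forall]
  refine .iInter fun s => isPi11_of_forall_local
    (fun x g => ∃ t, codedRel x s t ∧ ∀ n, g (ν n) ≠ t) (fun x => ?_)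
    fun x g ⟨t, h⟩ => ⟨{(s, t)}, by simp, range ν, countable_range _,
      fun x' g' hx hg => ⟨t, ?_⟩⟩
  · simp only [mem_ofPred_eq, countable_iff_exists_subset_range, not_exists, subset_def,
      mem_range, not_forall]
    exact (ν).injective.surjective_comp_right.forall.trans (by simp)
  · simpa (disch := simp) only [hx, hg] using h

/-- The class of (codes of) regular Suslin trees is a `Π¹₁` subset of `2^{ω₁}`. -/
theorem statement_2 :
    IsPi11 (gbsTop Omega1 Bool)
      {x : Omega1 → Bool | IsRegularTreeCode x ∧ IsSuslinTree (codedRel x)} := by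
  simp only [IsRegularTreeCode, isRegularTree_and_isSuslinTree_iff, ofPred_and]
  refine isPi11_isTreeOrder.inter (.inter ?_ (.inter ?_ (isPi11_rooted.inter
    (isPi11_binBranching.inter isPi11_forall_not_countable_setOf_rel))))
  · simpa only [isChainIn_iff_pairwise] using isPi11_forall_pairwise_countable
      (fun x a b => codedRel x a b ∨ codedRel x b a) fun _ _ _ _ => or_congr
  · exact isPi11_forall_pairwise_countable (fun x a b => ¬ codedRel x a b ∧ ¬ codedRel x b a)
      fun _ _ _ _ h h' => and_congr (not_congr h) (not_congr h')

end
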